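/- For every subset D of {1, ..., n-1} and all i, j with 2 ≤ i < j ≤ n-1: the vector r_D satisfies the covering equality r_D(i,j) + r_D(i-1,j+1) = r_D(i,j+1) + r_D(i-1,j) if and only if it is not the case that (r_D(i,j) = 0 and i-1 ∈ D and j ∈ D), i.e., unless no breakpoint of D lies in [i, j-1] while i-1 ∈ D and j ∈ D. -/
import Mathlib


/-- `r_D i j = 1` iff some breakpoint `k ∈ D` satisfies `i ≤ k < j`. -/
def rD (D : Finset ℕ) (i j : ℕ) : ℕ := if ∃ k ∈ D, i ≤ k ∧ k < j then 1 else 0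

/-- The ray `r_D` lies on the covering facet
`r_D(i,j) + r_D(i-1,j+1) = r_D(i,j+1) + r_D(i-1,j)` iff it is not the case that
`r_D(i,j) = 0`, `i-1 ∈ D`, and `j ∈ D`. -/
theorem rD_covering_equality_iff (n : ℕ) (hn : 4 ≤ n) (D : Finset ℕ)
    (hD : D ⊆ Finset.Icc 1 (n - 1)) (i j : ℕ) (hi2 : 2 ≤ i) (hij : i < j)
    (hjn : j ≤ n - 1) :
    rD D i j + rD D (i - 1) (j + 1) = rD D i (j + 1) + rD D (i - 1) j ↔
      ¬(rD D i j = 0 ∧ i - 1 ∈ D ∧ j ∈ D) := by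
  simp only [rD]
  by_cases hA : ∃ k ∈ D, i ≤ k ∧ k < j
  · obtain ⟨k, hk, h1, h2⟩ := hA
    have hA' : ∃ k ∈ D, i ≤ k ∧ k < j := ⟨k, hk, h1, h2⟩
    rw [if_pos hA', if_pos ⟨k, hk, by omega, by omega⟩,
      if_pos ⟨k, hk, by omega, by omega⟩, if_pos ⟨k, hk, by omega, by omega⟩]
    simp
  · have e1 : (∃ k ∈ D, i - 1 ≤ k ∧ k < j + 1) ↔ (i - 1 ∈ D ∨ j ∈ D) := by
      constructor
      · rintro ⟨k, hk, h1, h2⟩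
        have : ¬(i ≤ k ∧ k < j) := fun h => hA ⟨k, hk, h⟩
        have : k = i - 1 ∨ k = j := by omega
        rcases this with h | h <;> [left; right] <;> rwa [h] at hk
      · rintro (h | h)
        · exact ⟨i - 1, h, le_refl _, by omega⟩
        · exact ⟨j, h, by omega, by omega⟩
    have e2 : (∃ k ∈ D, i ≤ k ∧ k < j + 1) ↔ j ∈ D := by
      constructor
      · rintro ⟨k, hk, h1, h2⟩
        have : ¬(i ≤ k ∧ k < j) := fun h => hA ⟨k, hk, h⟩
        have : k = j := by omega
        rwa [this] at hk
      · intro h; exact ⟨j, h, by omega, by omega⟩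
    have e3 : (∃ k ∈ D, i - 1 ≤ k ∧ k < j) ↔ i - 1 ∈ D := by
      constructor
      · rintro ⟨k, hk, h1, h2⟩
        have : ¬(i ≤ k ∧ k < j) := fun h => hA ⟨k, hk, h⟩
        have : k = i - 1 := by omega
        rwa [this] at hk
      · intro h; exact ⟨i - 1, h, le_refl _, by omega⟩
    rw [if_neg hA]
    by_cases hm : i - 1 ∈ D <;> by_cases hj : j ∈ D <;>
      simp only [e1, e2, e3] <;> simp [hm, hj]
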